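/- arXiv:1705.03638 — 2 statements merged into one kernel-verified Lean document; each statement's English description precedes it below -/
import Mathlib

section
/- Define P_S for a rooted tree by P_η(n) = 1 for the trivial tree, and P_S(n) = Σ_{k=0}^{n} ∏_{i=1}^{m} P_{S_i}(k) when S = C_m[S_1,…,S_m]. Then for each tree S, the function P_S : ℕ → ℕ agrees with a polynomial over ℚ of degree |S| (the number of vertices of S) with leading coefficient 1/S!, where S! = ∏_{v ∈ S} |S_v| and S_v is the subtree rooted at v. -/
/-- Rooted trees: `eta` is the trivial tree (a single edge, no vertices), and
`node [S₁,…,Sₘ]` is the tree `C_m[S₁,…,Sₘ]` obtained by grafting `S₁,…,Sₘ` onto a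
corolla with a new root vertex. -/
inductive RTree : Type
  | eta : RTree
  | node : List RTree → RTree

namespace RTree

/-- `|S|`, the number of vertices of the tree `S`. -/
def size : RTree → ℕ
  | .eta => 0
  | .node ss => 1 + (ss.attach.map (fun s => size s.1)).sum
decreasing_by
  simp_wf
  have := List.sizeOf_lt_of_mem s.2
  omega

/-- The tree factorial `S! = ∏_v |S_v|`, the product over all vertices `v` of `S` of the
number of vertices of the maximal subtree `S_v` rooted at `v`. -/
def tfact : RTree → ℕ
  | .eta => 1
  | .node ss => size (.node ss) * (ss.attach.map (fun s => tfact s.1)).prod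
decreasing_by
  simp_wf
  have := List.sizeOf_lt_of_mem s.2
  omega

/-- The height of a tree: the number of vertices on a longest branch, so `ht(η) = 0` and
`ht(C_m[S₁,…,Sₘ]) = 1 + maxᵢ ht(Sᵢ)`. -/
def ht : RTree → ℕ
  | .eta => 0
  | .node ss => 1 + (ss.attach.map (fun s => ht s.1)).foldr max 0
decreasing_by
  simp_wf
  have := List.sizeOf_lt_of_mem s.2
  omega

/-- The number of shuffles of two trees, defined recursively by `sh(S,η) = sh(η,T) = 1`
and `sh(C_m[S₁,…,Sₘ], C_n[T₁,…,Tₙ]) = ∏ᵢ sh(Sᵢ,T) + ∏ⱼ sh(S,Tⱼ)`. -/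
def sh : RTree → RTree → ℕ
  | .eta, _ => 1
  | .node _, .eta => 1
  | .node ss, .node ts =>
      (ss.attach.map (fun s => sh s.1 (.node ts))).prod +
      (ts.attach.map (fun t => sh (.node ss) t.1)).prod
termination_by S T => sizeOf S + sizeOf T
decreasing_by
  · simp_wf
    have := List.sizeOf_lt_of_mem s.2
    omega
  · simp_wf
    have := List.sizeOf_lt_of_mem t.2
    omega

/-- `P S n = sh(S, Lₙ)`, the number of shuffles of `S` with the linear tree with `n`
vertices: `P_η(n) = 1` and `P_{C_m[S₁,…,Sₘ]}(n) = ∑_{k=0}^{n} ∏ᵢ P_{Sᵢ}(k)`. -/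
def P : RTree → ℕ → ℕ
  | .eta, _ => 1
  | .node ss, n => ∑ k ∈ Finset.range (n + 1), (ss.attach.map (fun s => P s.1 k)).prod
termination_by S n => sizeOf S
decreasing_by
  simp_wf
  have := List.sizeOf_lt_of_mem s.2
  omega

end RTree

/-! Summing over `k ≤ n` sends a polynomial function of degree `d` with leading coefficient `c` to
one of degree `d + 1` with leading coefficient `c / (d + 1)` (Faulhaber's formula, through the
Bernoulli polynomials), and pointwise products add degrees and multiply leading coefficients.
The recursion defining `P_S` therefore reproduces the recursions `|C_m[Sᵢ]| = 1 + ∑ |Sᵢ|` and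
`C_m[Sᵢ]! = |C_m[Sᵢ]| ∏ Sᵢ!`. -/

open Polynomial Finset

theorem Polynomial.natDegree_bernoulli (n : ℕ) : (bernoulli n).natDegree = n := by
  refine natDegree_eq_of_le_of_coeff_ne_zero ?_ (by simp [coeff_bernoulli])
  exact natDegree_le_iff_coeff_eq_zero.mpr fun i hi => by simp [coeff_bernoulli, not_le.mpr hi]

theorem Polynomial.monic_bernoulli (n : ℕ) : (bernoulli n).Monic := by
  simp [Monic, leadingCoeff, natDegree_bernoulli, coeff_bernoulli]

theorem exists_eval_eq_sum_range_pow (d : ℕ) :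
    ∃ F : ℚ[X], F.degree = (d + 1 : ℕ) ∧ F.leadingCoeff = 1 / (d + 1) ∧
      ∀ n : ℕ, F.eval (n : ℚ) = ∑ k ∈ range (n + 1), (k : ℚ) ^ d := by
  set A := (Polynomial.bernoulli (d + 1)).comp (X + C 1)
  have hA : A.Monic := (monic_bernoulli _).comp (monic_X_add_C 1) (by rw [natDegree_X_add_C]; simp)
  have hAdeg : A.natDegree = d + 1 := by
    rw [natDegree_comp, natDegree_bernoulli, natDegree_X_add_C, mul_one]
  set B := A - C (_root_.bernoulli (d + 1))
  have hB : B.Monic := hA.sub_of_left <| degree_C_le.trans_lt <| by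
    rw [degree_eq_natDegree hA.ne_zero, hAdeg]; exact WithBot.coe_lt_coe.mpr d.succ_pos
  have hBdeg : B.natDegree = d + 1 := by rw [natDegree_sub_C, hAdeg]
  refine ⟨C (1 / (d + 1) : ℚ) * B, ?_, hB.leadingCoeff_C_mul _, fun n => ?_⟩
  · rw [degree_C_mul (by positivity), degree_eq_natDegree hB.ne_zero, hBdeg]
  · have h := sum_range_pow_eq_bernoulli_sub (n + 1) d
    push_cast at h
    simp only [B, A, eval_mul, eval_C, eval_sub, eval_comp, eval_add, eval_X, ← h]
    field_simp

theorem exists_eval_eq_sum_range_eval (q : ℚ[X]) :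
    ∃ p : ℚ[X], p.degree = q.degree + 1 ∧ p.leadingCoeff = q.leadingCoeff / (q.natDegree + 1) ∧
      ∀ n : ℕ, p.eval (n : ℚ) = ∑ k ∈ range (n + 1), q.eval (k : ℚ) := by
  induction q using induction_with_natDegree_le _ q.natDegree with
  | zero => exact ⟨0, by simp, by simp, by simp⟩
  | C_mul_pow d r hr _ =>
    obtain ⟨F, hFdeg, hFlc, hFeval⟩ := exists_eval_eq_sum_range_pow d
    refine ⟨C r * F, ?_, ?_, fun n => ?_⟩
    · rw [degree_C_mul hr, hFdeg, degree_C_mul_X_pow d hr]; rfl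
    · rw [leadingCoeff_mul, leadingCoeff_C, hFlc, leadingCoeff_C_mul_X_pow,
        natDegree_C_mul_X_pow d r hr, mul_one_div]
    · simp only [eval_mul, eval_C, hFeval, mul_sum, eval_pow, eval_X]
  | add f g hfg _ ihf ihg =>
    obtain ⟨pf, hpf_deg, -, hpf_eval⟩ := ihf
    obtain ⟨pg, hpg_deg, hpg_lc, hpg_eval⟩ := ihg
    have hfg' : f.degree < g.degree := degree_lt_degree hfg
    have hp : pf.degree < pg.degree := by
      rw [hpf_deg, hpg_deg]
      exact WithBot.add_lt_add_right WithBot.one_ne_bot hfg'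
    refine ⟨pf + pg, ?_, ?_, fun n => ?_⟩
    · rw [degree_add_eq_right_of_degree_lt hp, degree_add_eq_right_of_degree_lt hfg', hpg_deg]
    · rw [leadingCoeff_add_of_degree_lt hp, leadingCoeff_add_of_degree_lt hfg',
        natDegree_add_eq_right_of_degree_lt hfg', hpg_lc]
    · simp only [eval_add, hpf_eval, hpg_eval, sum_add_distrib]
  | df => exact le_rfl

def IsPolyFun (f : ℕ → ℚ) (d : ℕ) (c : ℚ) : Prop :=
  ∃ p : ℚ[X], p.degree = d ∧ p.leadingCoeff = c ∧ ∀ n : ℕ, p.eval (n : ℚ) = f n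

namespace IsPolyFun

theorem one : IsPolyFun (fun _ => 1) 0 1 := ⟨1, by simp, by simp, by simp⟩

variable {f g : ℕ → ℚ} {d e : ℕ} {c c' : ℚ}

theorem mul (hf : IsPolyFun f d c) (hg : IsPolyFun g e c') :
    IsPolyFun (fun n => f n * g n) (d + e) (c * c') := by
  obtain ⟨p, hpd, hpc, hpf⟩ := hf
  obtain ⟨q, hqd, hqc, hqg⟩ := hg
  exact ⟨p * q, by rw [degree_mul, hpd, hqd]; rfl, by rw [leadingCoeff_mul, hpc, hqc],
    fun n => by rw [eval_mul, hpf, hqg]⟩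

theorem list_prod {ι : Type*} (l : List ι) {f : ι → ℕ → ℚ} {d : ι → ℕ} {c : ι → ℚ}
    (h : ∀ i ∈ l, IsPolyFun (f i) (d i) (c i)) :
    IsPolyFun (fun n => (l.map (f · n)).prod) (l.map d).sum (l.map c).prod := by
  induction l with
  | nil => exact one
  | cons i l ih =>
    simpa using (h i (by simp)).mul (ih fun j hj => h j (by simp [hj]))

theorem sum_range_succ (hf : IsPolyFun f d c) :
    IsPolyFun (fun n => ∑ k ∈ range (n + 1), f k) (d + 1) (c / (d + 1)) := by
  obtain ⟨q, hqd, hqc, hqf⟩ := hf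
  obtain ⟨p, hpd, hpc, hpq⟩ := exists_eval_eq_sum_range_eval q
  refine ⟨p, by rw [hpd, hqd]; rfl, by rw [hpc, hqc, natDegree_eq_of_degree_eq_some hqd], fun n => ?_⟩
  simp only [hpq, hqf]

end IsPolyFun

namespace RTree

theorem size_node (ss : List RTree) : size (node ss) = 1 + (ss.map size).sum := by
  rw [size, List.map_attach_eq_pmap]; simp

theorem tfact_node (ss : List RTree) : tfact (node ss) = size (node ss) * (ss.map tfact).prod := by
  rw [tfact]; simp

theorem P_node (ss : List RTree) (n : ℕ) :
    P (node ss) n = ∑ k ∈ range (n + 1), (ss.map (P · k)).prod := by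
  rw [P]; simp

theorem isPolyFun_P : (S : RTree) → IsPolyFun (fun n => (P S n : ℚ)) S.size (1 / S.tfact)
  | .eta => by simpa [P, size, tfact] using IsPolyFun.one
  | .node ss => by
    have ih : ∀ s ∈ ss, IsPolyFun (fun n => (P s n : ℚ)) s.size (1 / s.tfact) := fun s hs =>
      have := List.sizeOf_lt_of_mem hs
      isPolyFun_P s
    have hsum := (IsPolyFun.list_prod ss ih).sum_range_succ
    have hP : (fun n => (P (node ss) n : ℚ)) =
        fun n => ∑ k ∈ range (n + 1), (ss.map fun s => (P s k : ℚ)).prod := by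
      funext n
      simp only [P_node, Nat.cast_sum, Nat.cast_list_prod, List.map_map]
      rfl
    have hsize : (node ss).size = (ss.map size).sum + 1 := by rw [size_node, add_comm]
    have htfact : 1 / ((node ss).tfact : ℚ) =
        (ss.map fun s => 1 / (s.tfact : ℚ)).prod / (((ss.map size).sum : ℕ) + 1) := by
      rw [tfact_node, hsize, Nat.cast_mul, Nat.cast_list_prod, one_div, mul_inv, List.prod_inv,
        List.map_map, List.map_map, Nat.cast_succ, div_eq_mul_inv, mul_comm]
      simp only [one_div, Function.comp_def]
    rwa [hP, hsize, htfact]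
termination_by S => sizeOf S
decreasing_by simp_wf; omega

end RTree

/-- For each tree `S`, the shuffle-counting function `n ↦ P_S(n) = sh(S, Lₙ)` agrees
with a polynomial over `ℚ` of degree `|S|` and leading coefficient `1/S!`. -/
theorem P_is_polynomial (S : RTree) :
    ∃ p : Polynomial ℚ, p.degree = (RTree.size S : ℕ) ∧
      p.leadingCoeff = 1 / (RTree.tfact S : ℚ) ∧
      ∀ n : ℕ, p.eval (n : ℚ) = (RTree.P S n : ℚ) :=
  RTree.isPolyFun_P S
end

section
/- With sh defined as in the recursive definition (sh(S,η)=sh(η,T)=1 and sh(C_m[S_i], C_n[T_j]) = ∏ sh(S_i,T) + ∏ sh(S,T_j)), for any two trees S and T one has sh(S,T) ≥ C(ht(S)+ht(T), ht(S)), where ht denotes the height (number of vertices on a longest branch). -/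
/-! Induct on both trees. For `S = C_m[Sᵢ]` and `T = C_n[Tⱼ]` with `ht S = M + 1`, `ht T = N + 1`,
Pascal's rule gives `C(ht S + ht T, ht S) = C(M + ht T, M) + C(ht S + N, N)`. The first term is
bounded by `∏ᵢ sh(Sᵢ, T)` through the factor of a child of maximal height `M` (all factors are
`≥ 1`), the second symmetrically by `∏ⱼ sh(S, Tⱼ)`. -/

theorem Nat.choose_add_one_add_add_one (m n : ℕ) :
    (m + 1 + (n + 1)).choose (m + 1) = (m + (n + 1)).choose m + (m + 1 + n).choose n := by
  rw [show m + 1 + (n + 1) = m + (n + 1) + 1 by ring, Nat.choose_succ_succ',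
    show m + (n + 1) = m + 1 + n by ring, Nat.choose_symm_add]

theorem List.foldr_max_zero_eq_zero_or_mem (l : List ℕ) :
    l.foldr max 0 = 0 ∨ l.foldr max 0 ∈ l := by
  rcases eq_or_ne l [] with rfl | hl
  · exact Or.inl rfl
  · exact Or.inr (List.maximum_mem (List.foldr_max_of_ne_nil hl).symm)

theorem List.apply_foldr_max_le_prod {ι : Type*} (l : List ι) (a f : ι → ℕ) (g : ℕ → ℕ)
    (hg₀ : g 0 ≤ 1) (hf : ∀ i ∈ l, 1 ≤ f i) (hgf : ∀ i ∈ l, g (a i) ≤ f i) :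
    g ((l.map a).foldr max 0) ≤ (l.map f).prod := by
  have hf' : ∀ x ∈ l.map f, 1 ≤ x := by
    simpa only [List.forall_mem_map] using hf
  rcases (l.map a).foldr_max_zero_eq_zero_or_mem with h | h
  · rw [h]
    exact hg₀.trans (List.one_le_prod_of_one_le hf')
  · obtain ⟨i, hi, hai⟩ := List.mem_map.mp h
    rw [← hai]
    exact (hgf i hi).trans (List.single_le_prod hf' _ (List.mem_map_of_mem hi))

namespace RTree

@[elab_as_elim, induction_eliminator]
theorem induction {motive : RTree → Prop} (eta : motive eta)
    (node : ∀ ss, (∀ s ∈ ss, motive s) → motive (node ss)) : ∀ t, motive t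
  | .eta => eta
  | .node ss => node ss fun s _ => induction eta node s

theorem ht_node (ss : List RTree) : ht (node ss) = (ss.map ht).foldr max 0 + 1 := by
  rw [ht, List.attach_map_val, add_comm]

theorem sh_node_node (ss ts : List RTree) :
    sh (node ss) (node ts) = (ss.map (sh · (node ts))).prod + (ts.map (sh (node ss))).prod := by
  rw [sh]
  congr 2
  · exact List.attach_map_val (f := (sh · (node ts)))
  · exact List.attach_map_val (f := sh (node ss))

theorem choose_le_sh_node_node {ss ts : List RTree}
    (hss : ∀ s ∈ ss, (ht s + ht (node ts)).choose (ht s) ≤ sh s (node ts))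
    (hts : ∀ t ∈ ts, (ht (node ss) + ht t).choose (ht (node ss)) ≤ sh (node ss) t) :
    (ht (node ss) + ht (node ts)).choose (ht (node ss)) ≤ sh (node ss) (node ts) := by
  set M := (ss.map ht).foldr max 0
  set N := (ts.map ht).foldr max 0
  have one_le_choose (a b : ℕ) : 1 ≤ (a + b).choose a := Nat.choose_pos (Nat.le_add_right a b)
  have hS : (M + ht (node ts)).choose M ≤ (ss.map (sh · (node ts))).prod :=
    List.apply_foldr_max_le_prod ss ht _ (fun m => (m + ht (node ts)).choose m) (by simp)
      (fun s hs => (one_le_choose _ _).trans (hss s hs)) hss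
  have hT : (ht (node ss) + N).choose N ≤ (ts.map (sh (node ss))).prod :=
    List.apply_foldr_max_le_prod ts ht _ (fun n => (ht (node ss) + n).choose n) (by simp)
      (fun t h => (one_le_choose _ _).trans (hts t h))
      (fun t h => Nat.choose_symm_add ▸ hts t h)
  rw [sh_node_node]
  calc (ht (node ss) + ht (node ts)).choose (ht (node ss))
      = (M + ht (node ts)).choose M + (ht (node ss) + N).choose N := by
        rw [ht_node ss, ht_node ts, Nat.choose_add_one_add_add_one]
    _ ≤ _ := add_le_add hS hT

end RTree

/-- Lower bound for the number of shuffles: for all trees `S` and `T`,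
`sh(S,T) ≥ C(ht(S)+ht(T), ht(S))`. -/
theorem choose_le_sh (S T : RTree) :
    (RTree.ht S + RTree.ht T).choose (RTree.ht S) ≤ RTree.sh S T := by
  induction S generalizing T with
  | eta => simp [RTree.sh, RTree.ht]
  | node ss ihS =>
    induction T with
    | eta => simp [RTree.sh, RTree.ht]
    | node ts ihT => exact RTree.choose_le_sh_node_node (fun s hs => ihS s hs _) ihT
end
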